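/- arXiv:1409.8235 — 2 statements merged into one kernel-verified Lean document; each statement's English description precedes it below -/
import Mathlib

section
/- For every k ≥ 1, the number of words over a fixed k-letter alphabet that are minimal of Zimin type 2 is m(2,k) = k! · Σ_{i=0}^{k-1} 2^{k-1-i} / i! = Σ_{i=0}^{k-1} (k!/i!) · 2^{k-1-i}. -/
open List Filter

/-- The Zimin pattern `Z_k` as a word over variables `0, 1, ..., k-1`
(`Z_0` is empty, `Z_{k+1} = Z_k · x_{k+1} · Z_k`). -/
def ziminWord : ℕ → List ℕ
  | 0 => []
  | k + 1 => ziminWord k ++ k :: ziminWord k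

/-- `w` is the image of the Zimin pattern `Z_k` under a non-erasing morphism. -/
def IsZiminImage {α : Type*} (k : ℕ) (w : List α) : Prop :=
  ∃ h : ℕ → List α, (∀ i, h i ≠ []) ∧ w = (ziminWord k).flatMap h

/-- The Zimin type of `w`: the maximum `k` such that `w` is an image of `Z_k`
under a non-erasing morphism (0 for the empty word). -/
noncomputable def ziminType {α : Type*} (w : List α) : ℕ :=
  sSup {k | IsZiminImage k w}

/-- The Zimin pattern `Z_k` embeds in `w`: some factor of `w` is an image of `Z_k`. -/
def ziminEmbeds {α : Type*} (k : ℕ) (w : List α) : Prop :=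
  ∃ u : List α, u <:+: w ∧ IsZiminImage k u

/-- Length of the longest border (proper prefix that is also a proper suffix) of `w`. -/
noncomputable def bordLen {α : Type*} (w : List α) : ℕ :=
  sSup {j | w.take j <:+ w ∧ j < w.length}

/-- Length of the longest short border (border of length `< |w|/2`) of `w`. -/
noncomputable def shortBordLen {α : Type*} (w : List α) : ℕ :=
  sSup {j | w.take j <:+ w ∧ 2 * j < w.length}

/-- The longest border of `w`. -/
noncomputable def bord {α : Type*} (w : List α) : List α := w.take (bordLen w)

/-- The longest short border of `w`. -/
noncomputable def shortBord {α : Type*} (w : List α) : List α := w.take (shortBordLen w)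

/-- The Fibonacci words over `Bool` (`a = false`, `b = true`), with
`fibWord 0 = F_0 = a`, `fibWord 1 = F_1 = F_0 F_{-1} = ab`, `F_{n} = F_{n-1} F_{n-2}`. -/
def fibWord : ℕ → List Bool
  | 0 => [false]
  | 1 => [false, true]
  | n + 2 => fibWord (n + 1) ++ fibWord n

/-- The Fibonacci numbers `Φ_n = |F_n|` (`Φ_0 = 1, Φ_1 = 2, Φ_2 = 3, ...`). -/
def Phi (n : ℕ) : ℕ := (fibWord n).length

/-- The infinite Fibonacci word `F_∞` (0-indexed letters). -/
def fibInf (i : ℕ) : Bool := (fibWord (i + 2)).getD i false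

/-- The prefix `F_∞[1..n]` of the infinite Fibonacci word. -/
def fibPrefix (n : ℕ) : List Bool := (List.range n).map fibInf


/-- A word of Zimin type `n` is minimal if every proper factor has Zimin type
strictly less than `n`. -/
def IsMinimalZimin {α : Type*} (n : ℕ) (w : List α) : Prop :=
  ziminType w = n ∧ ∀ u : List α, u <:+: w → u ≠ w → ziminType u < n

/-- `m(n,k)`: the number of `k`-ary minimal words of Zimin type `n`. -/
noncomputable def mcount (n k : ℕ) : ℕ :=
  {w : List (Fin k) | IsMinimalZimin n w}.ncard

/-!
A word is an image of `Z_2` iff it has the form `u v u`, and such a word has a prefix `c m c`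
with `c` a letter and `m` nonempty; an image of `Z_n`, `n ≥ 3`, has an image of `Z_2` as a proper
factor. Hence the minimal words of Zimin type 2 are the words `c l c`
(with `l` nonempty) having no proper factor `c' m c'`. Either `l = c`, or `c ∉ l` and no letter
recurs in `l` after a gap, i.e. `l = b₁^{j₁} ⋯ b_r^{j_r}` with distinct `bᵢ` and `jᵢ ∈ {1, 2}`.
Reading `ccc` as the case `r = 0`, these words are in bijection with the injective sequences
`c, b₁, …, b_r` carrying one bit per `bᵢ`; over `k` letters there are `k^{(r+1)} 2^r` of them
for each `r < k`, `k^{(r+1)}` being the falling factorial.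
-/

section ZiminType

variable {α : Type*}

theorem ziminWord_two : ziminWord 2 = [0, 1, 0] := rfl

theorem ziminWord_succ (n : ℕ) : ziminWord (n + 1) = ziminWord n ++ n :: ziminWord n := rfl

theorem le_length_ziminWord (n : ℕ) : n ≤ (ziminWord n).length := by
  induction n with
  | zero => simp
  | succ n ih => simp only [ziminWord_succ, length_append, length_cons]; omega

theorem length_le_length_flatMap {f : ℕ → List α} (hf : ∀ i, f i ≠ []) (l : List ℕ) :
    l.length ≤ (l.flatMap f).length := by
  induction l with
  | nil => simp
  | cons a l ih =>
    have := length_pos_iff.2 (hf a)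
    simp only [flatMap_cons, length_append, length_cons]
    omega

theorem IsZiminImage.le_length {n : ℕ} {w : List α} (h : IsZiminImage n w) : n ≤ w.length := by
  obtain ⟨f, hf, rfl⟩ := h
  exact (le_length_ziminWord n).trans (length_le_length_flatMap hf _)

theorem isZiminImage_two_iff {w : List α} :
    IsZiminImage 2 w ↔ ∃ u v, u ≠ [] ∧ v ≠ [] ∧ w = u ++ v ++ u := by
  constructor
  · rintro ⟨f, hf, rfl⟩
    exact ⟨f 0, f 1, hf 0, hf 1, by simp [ziminWord_two]⟩
  · rintro ⟨u, v, hu, hv, rfl⟩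
    refine ⟨fun i => if i = 0 then u else v, fun i => ?_, by simp [ziminWord_two]⟩
    dsimp only
    split_ifs <;> assumption

theorem IsZiminImage.isZiminImage_two {n : ℕ} {w : List α} (hn : 2 ≤ n)
    (h : IsZiminImage n w) : IsZiminImage 2 w := by
  obtain ⟨m, rfl⟩ : ∃ m, n = m + 1 + 1 := ⟨n - 2, by omega⟩
  obtain ⟨f, hf, rfl⟩ := h
  have hu : m + 1 ≤ ((ziminWord (m + 1)).flatMap f).length :=
    IsZiminImage.le_length ⟨f, hf, rfl⟩
  refine isZiminImage_two_iff.2 ⟨(ziminWord (m + 1)).flatMap f, f (m + 1),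
    ne_nil_of_length_pos (by omega), hf _, ?_⟩
  simp [ziminWord_succ (m + 1)]

theorem IsZiminImage.exists_ne_infix_isZiminImage_two {n : ℕ} {w : List α} (hn : 3 ≤ n)
    (h : IsZiminImage n w) : ∃ u, u <:+: w ∧ u ≠ w ∧ IsZiminImage 2 u := by
  obtain ⟨m, rfl⟩ : ∃ m, n = m + 2 + 1 := ⟨n - 3, by omega⟩
  obtain ⟨f, hf, rfl⟩ := h
  have hsplit : (ziminWord (m + 2 + 1)).flatMap f =
      (ziminWord (m + 2)).flatMap f ++ (f (m + 2) ++ (ziminWord (m + 2)).flatMap f) := by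
    simp [ziminWord_succ (m + 2)]
  refine ⟨(ziminWord (m + 2)).flatMap f, hsplit ▸ infix_append_left, fun heq => ?_,
    IsZiminImage.isZiminImage_two (by omega) ⟨f, hf, rfl⟩⟩
  have hlen := congrArg length (heq.trans hsplit)
  have := length_pos_iff.2 (hf (m + 2))
  simp only [length_append] at hlen
  omega

theorem two_le_ziminType {w : List α} (h : IsZiminImage 2 w) : 2 ≤ ziminType w :=
  le_csSup ⟨w.length, fun _ hn => hn.le_length⟩ h

theorem ziminType_lt_two_iff {w : List α} : ziminType w < 2 ↔ ¬ IsZiminImage 2 w := by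
  refine ⟨fun h h2 => (two_le_ziminType h2).not_gt h,
    fun h => Nat.lt_succ_of_le (csSup_le' fun n hn => ?_)⟩
  by_contra! hn2
  exact h (hn.isZiminImage_two hn2)

theorem isMinimalZimin_two_iff {w : List α} :
    IsMinimalZimin 2 w ↔ IsZiminImage 2 w ∧ ∀ u, u <:+: w → u ≠ w → ¬ IsZiminImage 2 u := by
  constructor
  · rintro ⟨hw, hu⟩
    exact ⟨not_not.1 (mt ziminType_lt_two_iff.2 (by omega)),
      fun u hu' hne => ziminType_lt_two_iff.1 (hu u hu' hne)⟩
  · rintro ⟨hw, hu⟩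
    refine ⟨le_antisymm (csSup_le' fun n hn => ?_) (two_le_ziminType hw),
      fun u hu' hne => ziminType_lt_two_iff.2 (hu u hu' hne)⟩
    by_contra! hn3
    obtain ⟨u, hu', hne, h2⟩ := hn.exists_ne_infix_isZiminImage_two hn3
    exact hu u hu' hne h2

end ZiminType

section Sandwich

variable {α : Type*}

def IsSandwich (w : List α) : Prop := ∃ c m, m ≠ [] ∧ w = c :: (m ++ [c])

def IsMinimalSandwich (w : List α) : Prop :=
  IsSandwich w ∧ ∀ u, u <:+: w → IsSandwich u → u = w

def SandwichFree (l : List α) : Prop := ∀ u, u <:+: l → ¬ IsSandwich u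

theorem IsSandwich.isZiminImage_two {w : List α} (h : IsSandwich w) : IsZiminImage 2 w := by
  obtain ⟨c, m, hm, rfl⟩ := h
  exact isZiminImage_two_iff.2 ⟨[c], m, cons_ne_nil _ _, hm, by simp⟩

theorem IsZiminImage.exists_prefix_isSandwich {w : List α} (h : IsZiminImage 2 w) :
    ∃ s, s <+: w ∧ IsSandwich s := by
  obtain ⟨_ | ⟨c, u⟩, v, hu, hv, rfl⟩ := isZiminImage_two_iff.1 h
  · exact absurd rfl hu
  · exact ⟨c :: (u ++ v ++ [c]), ⟨u, by simp⟩, c, u ++ v, by simp [hv], rfl⟩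

theorem isMinimalZimin_two_iff_isMinimalSandwich {w : List α} :
    IsMinimalZimin 2 w ↔ IsMinimalSandwich w := by
  rw [isMinimalZimin_two_iff]
  constructor
  · rintro ⟨hw, hmin⟩
    have hsw : ∀ u, u <:+: w → IsSandwich u → u = w := fun u hu hsu =>
      by_contra fun hne => hmin u hu hne hsu.isZiminImage_two
    obtain ⟨s, hs, hss⟩ := hw.exists_prefix_isSandwich
    exact ⟨hsw s hs.isInfix hss ▸ hss, hsw⟩
  · rintro ⟨hw, hmin⟩
    refine ⟨hw.isZiminImage_two, fun u hu hne hu2 => hne ?_⟩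
    obtain ⟨s, hs, hss⟩ := hu2.exists_prefix_isSandwich
    have hsw := hmin s (hs.isInfix.trans hu) hss
    exact hu.eq_of_length (le_antisymm hu.length_le (hsw ▸ hs.length_le))

theorem sandwichFree_nil : SandwichFree ([] : List α) := by
  rintro u hu ⟨c, m, -, rfl⟩
  exact cons_ne_nil _ _ (eq_nil_of_infix_nil hu)

theorem exists_prefix_cons_isSandwich_iff {a : α} {l : List α} :
    (∃ s, s <+: a :: l ∧ IsSandwich s) ↔ a ∈ l.tail := by
  constructor
  · rintro ⟨_, hs, c, _ | ⟨b, m⟩, hm, rfl⟩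
    · exact absurd rfl hm
    obtain ⟨rfl, hs'⟩ := cons_prefix_cons.1 hs
    obtain _ | ⟨b', l⟩ := l
    · exact absurd hs'.length_le (by simp)
    rw [cons_append, cons_prefix_cons] at hs'
    exact hs'.2.subset (mem_concat_self ..)
  · intro ha
    obtain _ | ⟨b, l⟩ := l
    · exact absurd ha not_mem_nil
    obtain ⟨p, q, rfl⟩ := append_of_mem ha
    exact ⟨a :: (b :: p ++ [a]), ⟨q, by simp⟩, a, b :: p, cons_ne_nil _ _, rfl⟩

theorem sandwichFree_cons {a : α} {l : List α} :
    SandwichFree (a :: l) ↔ SandwichFree l ∧ a ∉ l.tail := by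
  rw [← exists_prefix_cons_isSandwich_iff]
  constructor
  · intro h
    exact ⟨fun u hu => h u (hu.trans (suffix_cons a l).isInfix),
      fun ⟨s, hs, hss⟩ => h s hs.isInfix hss⟩
  · rintro ⟨hl, ha⟩ u hu hsu
    rcases infix_cons_iff.1 hu with hu | hu
    · exact ha ⟨u, hu, hsu⟩
    · exact hl u hu hsu

/-- A factor `d m d` not inside `B` contains the first or the last letter, so `d = c`, and then
`c ∉ B` forces it to be the whole word. -/
theorem isMinimalSandwich_cons_append_singleton {c : α} {B : List α} (hB : B ≠ [])
    (hc : c ∉ B) (hfree : SandwichFree B) : IsMinimalSandwich (c :: (B ++ [c])) := by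
  refine ⟨⟨c, B, hB, rfl⟩, ?_⟩
  rintro u hu ⟨d, m, hm, rfl⟩
  rcases infix_cons_iff.1 hu with hpre | hinf
  · obtain ⟨rfl, hpre⟩ := cons_prefix_cons.1 hpre
    rcases prefix_concat_iff.1 hpre with heq | hpre
    · rw [heq]
    · exact absurd (hpre.subset (mem_concat_self ..)) hc
  · rcases infix_concat_iff.1 hinf with ⟨t, ht⟩ | hinf
    · rw [← cons_append, ← append_assoc, append_singleton_inj] at ht
      obtain ⟨rfl, rfl⟩ := ht
      exact absurd (mem_append_right t mem_cons_self) hc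
    · exact absurd ⟨d, m, hm, rfl⟩ (hfree _ hinf)

end Sandwich

section Blocks

variable {α : Type*}

/-- The word `b₁^{j₁} ⋯ b_r^{j_r}` for `bs = [(b₁, t₁), …, (b_r, t_r)]`, where `jᵢ = 2` iff `tᵢ`. -/
def blockWord (bs : List (α × Bool)) : List α :=
  bs.flatMap fun p => if p.2 then [p.1, p.1] else [p.1]

@[simp]
theorem blockWord_nil : blockWord ([] : List (α × Bool)) = [] := rfl

@[simp]
theorem blockWord_cons_false (a : α) (bs : List (α × Bool)) :
    blockWord ((a, false) :: bs) = a :: blockWord bs := rfl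

@[simp]
theorem blockWord_cons_true (a : α) (bs : List (α × Bool)) :
    blockWord ((a, true) :: bs) = a :: a :: blockWord bs := rfl

theorem blockWord_cons_ne_nil (p : α × Bool) (bs : List (α × Bool)) :
    blockWord (p :: bs) ≠ [] := by
  obtain ⟨a, _ | _⟩ := p <;> simp

theorem mem_blockWord {a : α} {bs : List (α × Bool)} :
    a ∈ blockWord bs ↔ a ∈ bs.map Prod.fst := by
  induction bs with
  | nil => simp
  | cons p bs ih => obtain ⟨b, _ | _⟩ := p <;> simp [ih]

theorem sandwichFree_blockWord {bs : List (α × Bool)} (h : (bs.map Prod.fst).Nodup) :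
    SandwichFree (blockWord bs) := by
  induction bs with
  | nil => exact sandwichFree_nil
  | cons p bs ih =>
    obtain ⟨a, t⟩ := p
    rw [map_cons, nodup_cons, ← mem_blockWord] at h
    have hcons : SandwichFree (a :: blockWord bs) :=
      sandwichFree_cons.2 ⟨ih h.2, fun ha => h.1 (mem_of_mem_tail ha)⟩
    cases t
    · exact hcons
    · exact sandwichFree_cons.2 ⟨hcons, h.1⟩

theorem exists_blockWord_of_sandwichFree {l : List α} (h : SandwichFree l) :
    ∃ bs : List (α × Bool), (bs.map Prod.fst).Nodup ∧ blockWord bs = l :=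
  match l, h with
  | [], _ => ⟨[], nodup_nil, rfl⟩
  | [a], _ => ⟨[(a, false)], by simp, rfl⟩
  | a :: b :: l, h => by
    obtain ⟨hbl, ha⟩ := sandwichFree_cons.1 h
    by_cases hab : a = b
    · subst hab
      obtain ⟨bs, hbs, rfl⟩ := exists_blockWord_of_sandwichFree (sandwichFree_cons.1 hbl).1
      exact ⟨(a, true) :: bs, nodup_cons.2 ⟨mt mem_blockWord.2 ha, hbs⟩, rfl⟩
    · obtain ⟨bs, hbs, hl⟩ := exists_blockWord_of_sandwichFree hbl
      refine ⟨(a, false) :: bs, nodup_cons.2 ⟨?_, hbs⟩, by simp [hl]⟩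
      rw [← mem_blockWord, hl, mem_cons, not_or]
      exact ⟨hab, ha⟩

theorem blockWord_inj_of_nodup {bs bs' : List (α × Bool)} (h : (bs.map Prod.fst).Nodup)
    (h' : (bs'.map Prod.fst).Nodup) (heq : blockWord bs = blockWord bs') : bs = bs' := by
  induction bs generalizing bs' with
  | nil =>
    obtain _ | ⟨⟨a, _ | _⟩, bs'⟩ := bs' <;> simp_all
  | cons p bs ih =>
    obtain _ | ⟨p', bs'⟩ := bs'
    · obtain ⟨a, _ | _⟩ := p <;> simp_all
    obtain ⟨a, _ | _⟩ := p <;> obtain ⟨a', _ | _⟩ := p' <;>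
      simp only [map_cons, nodup_cons, ← mem_blockWord] at h h' <;>
      simp only [blockWord_cons_false, blockWord_cons_true, cons.injEq] at heq
    · obtain ⟨rfl, heq⟩ := heq
      rw [ih h.2 h'.2 heq]
    · obtain ⟨rfl, heq⟩ := heq
      exact absurd (heq ▸ mem_cons_self) h.1
    · obtain ⟨rfl, heq⟩ := heq
      exact absurd (heq ▸ mem_cons_self) h'.1
    · obtain ⟨rfl, -, heq⟩ := heq
      rw [ih h.2 h'.2 heq]

/-- The word `c · blockWord bs · c`, except that `bs = []` encodes `ccc`. -/
def minWord (c : α) : List (α × Bool) → List α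
  | [] => [c, c, c]
  | p :: bs => c :: (blockWord (p :: bs) ++ [c])

theorem isMinimalSandwich_minWord {c : α} {bs : List (α × Bool)}
    (h : (c :: bs.map Prod.fst).Nodup) : IsMinimalSandwich (minWord c bs) := by
  obtain _ | ⟨p, bs⟩ := bs
  · refine ⟨⟨c, [c], cons_ne_nil _ _, rfl⟩, ?_⟩
    rintro u hu ⟨d, m, hm, rfl⟩
    have := length_pos_iff.2 hm
    exact hu.eq_of_length (le_antisymm hu.length_le (by simp [minWord]; omega))
  · rw [nodup_cons, ← mem_blockWord] at h
    exact isMinimalSandwich_cons_append_singleton (blockWord_cons_ne_nil p bs) h.1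
      (sandwichFree_blockWord h.2)

theorem IsMinimalSandwich.exists_minWord {w : List α} (h : IsMinimalSandwich w) :
    ∃ c bs, (c :: bs.map Prod.fst).Nodup ∧ minWord c bs = w := by
  obtain ⟨⟨c, l, hl, rfl⟩, hmin⟩ := h
  have hlen : ∀ u, u <:+: c :: (l ++ [c]) → IsSandwich u → l.length + 2 ≤ u.length :=
    fun u hu hsu => by simp [hmin u hu hsu]
  by_cases hc : c ∈ l
  · obtain ⟨l₁, l₂, rfl⟩ := append_of_mem hc
    have h₁ : l₁ = [] := by
      by_contra h₁
      have := hlen _ ⟨[], l₂ ++ [c], by simp⟩ ⟨c, l₁, h₁, rfl⟩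
      simp only [length_append, length_cons, length_nil] at this
      omega
    subst h₁
    have h₂ : l₂ = [] := by
      by_contra h₂
      have := hlen _ ⟨[c], [], by simp⟩ ⟨c, l₂, h₂, rfl⟩
      simp only [length_append, length_cons, length_nil] at this
      omega
    subst h₂
    exact ⟨c, [], by simp, rfl⟩
  · have hfree : SandwichFree l := fun u hu hsu => by
      have := hlen u (hu.trans (infix_append' [c] l [c])) hsu
      have := hu.length_le
      omega
    obtain ⟨_ | ⟨p, bs⟩, hbs, rfl⟩ := exists_blockWord_of_sandwichFree hfree
    · exact absurd rfl hl
    · exact ⟨c, p :: bs, nodup_cons.2 ⟨mt mem_blockWord.2 hc, hbs⟩, rfl⟩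

theorem setOf_isMinimalZimin_two :
    {w : List α | IsMinimalZimin 2 w} =
      (fun p : α × List (α × Bool) => minWord p.1 p.2) ''
        {p | (p.1 :: p.2.map Prod.fst).Nodup} := by
  ext w
  simp only [Set.mem_ofPred_eq, Set.mem_image, isMinimalZimin_two_iff_isMinimalSandwich,
    Prod.exists]
  exact ⟨IsMinimalSandwich.exists_minWord, fun ⟨c, bs, h, hw⟩ => hw ▸ isMinimalSandwich_minWord h⟩

theorem minWord_injOn :
    Set.InjOn (fun p : α × List (α × Bool) => minWord p.1 p.2)
      {p | (p.1 :: p.2.map Prod.fst).Nodup} := by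
  rintro ⟨c, _ | ⟨p, bs⟩⟩ h ⟨c', _ | ⟨p', bs'⟩⟩ h' heq <;>
    simp only [Set.mem_ofPred_eq, nodup_cons, ← mem_blockWord] at h h' <;>
    simp only [minWord, cons.injEq] at heq <;>
    obtain ⟨rfl, heq⟩ := heq
  · rfl
  · rw [show [c, c] = [c] ++ [c] from rfl, append_singleton_inj] at heq
    exact absurd (heq.1 ▸ mem_singleton_self c) h'.1
  · rw [show [c, c] = [c] ++ [c] from rfl, append_singleton_inj] at heq
    exact absurd (heq.1 ▸ mem_singleton_self c) h.1
  · rw [blockWord_inj_of_nodup h.2 h'.2 (append_singleton_inj.1 heq).1]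

end Blocks

section Counting

variable {α : Type*} [Fintype α]

def arrangementPair (x : Σ r : Fin (Fintype.card α), (Fin (r + 1) ↪ α) × (Fin r → Bool)) :
    α × List (α × Bool) :=
  (x.2.1 0, List.ofFn fun i => (x.2.1 i.succ, x.2.2 i))

theorem arrangementPair_injective : Function.Injective (arrangementPair (α := α)) := by
  rintro ⟨r, e, j⟩ ⟨r', e', j'⟩ h
  simp only [arrangementPair, Prod.mk.injEq, ofFn_inj', Sigma.mk.inj_iff] at h
  obtain ⟨h0, hr, hf⟩ := h
  obtain rfl : r = r' := Fin.ext hr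
  have hf := eq_of_heq hf
  have he : e = e' := DFunLike.ext _ _ (Fin.cases h0 fun i => congrArg Prod.fst (congrFun hf i))
  have hj : j = j' := funext fun i => congrArg Prod.snd (congrFun hf i)
  rw [he, hj]

theorem range_arrangementPair :
    Set.range (arrangementPair (α := α)) = {p | (p.1 :: p.2.map Prod.fst).Nodup} := by
  ext ⟨c, bs⟩
  constructor
  · rintro ⟨⟨r, e, j⟩, h⟩
    simp only [arrangementPair, Prod.mk.injEq] at h
    obtain ⟨rfl, rfl⟩ := h
    have := nodup_ofFn.2 e.injective
    rw [ofFn_succ] at this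
    simpa [map_ofFn, Function.comp_def] using this
  · intro h
    have hlen : bs.length < Fintype.card α := by simpa using h.length_le_card
    let e : Fin (bs.length + 1) ↪ α :=
      ⟨(c :: bs.map Prod.fst).get ∘ Fin.cast (by simp),
        (nodup_iff_injective_get.1 h).comp (Fin.cast_injective _)⟩
    refine ⟨⟨⟨bs.length, hlen⟩, e, fun i => bs[i].2⟩, ?_⟩
    simp [arrangementPair, e]

theorem ncard_setOf_nodup :
    {p : α × List (α × Bool) | (p.1 :: p.2.map Prod.fst).Nodup}.ncard =
      ∑ r ∈ Finset.range (Fintype.card α), (Fintype.card α).descFactorial (r + 1) * 2 ^ r := by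
  rw [← range_arrangementPair, ← Nat.card_coe_set_eq,
    Nat.card_range_of_injective arrangementPair_injective, Nat.card_eq_fintype_card,
    Fintype.card_sigma, ← Fin.sum_univ_eq_sum_range]
  simp [Fintype.card_embedding_eq]

end Counting

theorem sum_range_descFactorial_mul_two_pow (k : ℕ) :
    ∑ r ∈ Finset.range k, k.descFactorial (r + 1) * 2 ^ r =
      ∑ i ∈ Finset.range k, Nat.factorial k / Nat.factorial i * 2 ^ (k - 1 - i) := by
  rw [← Finset.sum_range_reflect]
  refine Finset.sum_congr rfl fun r hr => ?_
  have := Finset.mem_range.1 hr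
  rw [Nat.descFactorial_eq_div (by omega), show k - (k - 1 - r + 1) = r by omega]

theorem mcount_two_general (k : ℕ) :
    mcount 2 k = ∑ i ∈ Finset.range k,
      (Nat.factorial k / Nat.factorial i) * 2 ^ (k - 1 - i) := by
  rw [mcount, setOf_isMinimalZimin_two, minWord_injOn.ncard_image, ncard_setOf_nodup,
    Fintype.card_fin, sum_range_descFactorial_mul_two_pow]

/-- Lemma 10: the number of `k`-ary minimal words of Zimin type 2 is
`m(2,k) = Σ_{i=0}^{k-1} (k!/i!) · 2^{k-1-i}`. -/
theorem mcount_two (k : ℕ) (hk : 1 ≤ k) :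
    mcount 2 k = ∑ i ∈ Finset.range k,
      (Nat.factorial k / Nat.factorial i) * 2 ^ (k - 1 - i) :=
  mcount_two_general k
end

section
/- For every r ≥ 2, f(3, r) ≤ √e · 2^r · (r+1)! + 2r + 1, where f(3, r) is the minimum number N such that the Zimin pattern Z_3 = x_1 x_2 x_1 x_3 x_1 x_2 x_1 embeds in every word of length at least N over an r-letter alphabet. -/
/-!
Every word of length `2r + 1` over `r` letters has two equal letters at distance at least two
(a word without this is a sequence of runs of length `≤ 2` of distinct letters, so has length
`≤ 2r`). A shortest such factor `a u a` is an image of `Z_2`, and it is determined by `a`, the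
letters of the runs of `u` (distinct and different from `a`, unless `u = a`) and the run lengths:
there are at most `r · ∑_{j<r} (r-1)(r-2)⋯(r-j) · 2^j ≤ √e · 2^(r-1) · r!` such words. Cutting a
longer word into blocks of length `2r + 1` separated by single letters, two blocks contain the same
such word `u`, which yields a factor `u m u` with `m` nonempty, an image of `Z_3`.
-/

open List Filter

/-- `f(n,k)`: the minimum `N` such that `Z_n` embeds in every word of length at
least `N` over a `k`-letter alphabet. -/
noncomputable def fbound (n k : ℕ) : ℕ :=
  sInf {N | ∀ w : List (Fin k), N ≤ w.length → ziminEmbeds n w}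

theorem lt_of_mem_ziminWord {k x : ℕ} (hx : x ∈ ziminWord k) : x < k := by
  induction k with
  | zero => simp [ziminWord] at hx
  | succ k ih =>
    simp only [ziminWord, mem_append, mem_cons] at hx
    rcases hx with hx | rfl | hx
    exacts [Nat.lt_succ_of_lt (ih hx), Nat.lt_succ_self _, Nat.lt_succ_of_lt (ih hx)]

theorem IsZiminImage.one {α : Type*} {w : List α} (hw : w ≠ []) : IsZiminImage 1 w :=
  ⟨fun _ => w, fun _ => hw, by simp [ziminWord]⟩

theorem IsZiminImage.succ {α : Type*} {k : ℕ} {u m : List α} (hu : IsZiminImage k u)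
    (hm : m ≠ []) : IsZiminImage (k + 1) (u ++ m ++ u) := by
  obtain ⟨h, hne, rfl⟩ := hu
  refine ⟨Function.update h k m, fun i => ?_, ?_⟩
  · rcases eq_or_ne i k with rfl | hi <;> simp [*]
  · have hk : (ziminWord k).flatMap (Function.update h k m) = (ziminWord k).flatMap h :=
      flatMap_congr fun x hx => Function.update_of_ne (lt_of_mem_ziminWord hx).ne _ _
    simp [ziminWord, hk]

section SpacedRepeat

variable {α : Type*}

def HasSpacedRepeat (w : List α) : Prop :=
  ∃ a u, u ≠ [] ∧ a :: u ++ [a] <:+: w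

theorem HasSpacedRepeat.mono {v w : List α} (hv : HasSpacedRepeat v) (hvw : v <:+: w) :
    HasSpacedRepeat w :=
  let ⟨a, u, hu, hinf⟩ := hv
  ⟨a, u, hu, hinf.trans hvw⟩

/-- Take a shortest spaced repeat `a u a`. -/
theorem HasSpacedRepeat.exists_minimal {w : List α} (hw : HasSpacedRepeat w) :
    ∃ a u, u ≠ [] ∧ a :: u ++ [a] <:+: w ∧ ¬HasSpacedRepeat u ∧ (u = [a] ∨ a ∉ u) := by
  induction hn : w.length using Nat.strong_induction_on generalizing w with
  | _ n ih =>
  obtain ⟨a, u, hu, hinf⟩ := hw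
  have hlen : u.length + 2 ≤ n := by
    have := hinf.length_le
    simp only [length_append, length_cons] at this
    omega
  have recurse : ∀ v, HasSpacedRepeat v → v <:+: a :: u ++ [a] → v.length < n →
      ∃ b x, x ≠ [] ∧ b :: x ++ [b] <:+: w ∧ ¬HasSpacedRepeat x ∧ (x = [b] ∨ b ∉ x) :=
    fun v hv hvw hvn =>
      let ⟨b, x, hx, hinfx, hmin⟩ := ih _ hvn hv rfl
      ⟨b, x, hx, hinfx.trans (hvw.trans hinf), hmin⟩
  by_cases hrep : HasSpacedRepeat u
  · exact recurse u hrep (infix_append [a] u [a]) (by omega)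
  by_cases ha : a ∈ u
  · obtain ⟨p, q, rfl⟩ := append_of_mem ha
    by_cases hp : p = []
    · by_cases hq : q = []
      · exact ⟨a, _, hu, hinf, hrep, .inl (by simp [hp, hq])⟩
      · refine recurse (a :: q ++ [a]) ⟨a, q, hq, infix_refl _⟩ ?_ (by simp at hlen ⊢; omega)
        exact ⟨a :: p, [], by simp⟩
    · refine recurse (a :: p ++ [a]) ⟨a, p, hp, infix_refl _⟩ ?_ (by simp at hlen ⊢; omega)
      exact ⟨[], q ++ [a], by simp⟩
  · exact ⟨a, u, hu, hinf, hrep, .inr ha⟩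

end SpacedRepeat

section RunLength

variable {α : Type*}

def expandRun (p : α × Bool) : List α := replicate (p.2.toNat + 1) p.1

theorem mem_flatMap_expandRun {c : List (α × Bool)} {x : α} :
    x ∈ c.flatMap expandRun ↔ x ∈ c.map Prod.fst := by
  simp [expandRun, mem_flatMap]

theorem length_flatMap_expandRun_le (c : List (α × Bool)) :
    (c.flatMap expandRun).length ≤ 2 * c.length := by
  induction c with
  | nil => simp
  | cons p c ih =>
    obtain ⟨x, _ | _⟩ := p <;>
      simp only [flatMap_cons, length_append, expandRun, length_replicate, length_cons] <;>
      simp only [Bool.toNat_false, Bool.toNat_true] <;> omega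

theorem exists_eq_flatMap_expandRun :
    ∀ u : List α, ¬HasSpacedRepeat u →
      ∃ c : List (α × Bool), u = c.flatMap expandRun ∧ (c.map Prod.fst).Nodup
  | [], _ => ⟨[], rfl, nodup_nil⟩
  | [x], _ => ⟨[(x, false)], rfl, nodup_singleton x⟩
  | x :: y :: t, hu => by
    have hxt : x ∉ t := fun hx => by
      obtain ⟨p, q, rfl⟩ := append_of_mem hx
      exact hu ⟨x, y :: p, cons_ne_nil _ _, ⟨[], q, by simp⟩⟩
    by_cases hxy : x = y
    · subst hxy
      obtain ⟨c, rfl, hc⟩ := exists_eq_flatMap_expandRun t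
        fun ht => hu (ht.mono (infix_cons (infix_cons (infix_refl t))))
      refine ⟨(x, true) :: c, rfl, nodup_cons.2 ⟨fun hx => hxt ?_, hc⟩⟩
      exact mem_flatMap_expandRun.2 hx
    · obtain ⟨c, hyt, hc⟩ := exists_eq_flatMap_expandRun (y :: t)
        fun ht => hu (ht.mono (infix_cons (infix_refl _)))
      refine ⟨(x, false) :: c, by simp [expandRun, ← hyt], nodup_cons.2 ⟨fun hx => ?_, hc⟩⟩
      rcases mem_cons.1 (hyt ▸ mem_flatMap_expandRun.2 hx) with rfl | hx
      exacts [hxy rfl, hxt hx]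

theorem length_le_of_not_hasSpacedRepeat [Fintype α] {u : List α} (hu : ¬HasSpacedRepeat u) :
    u.length ≤ 2 * Fintype.card α := by
  obtain ⟨c, rfl, hc⟩ := exists_eq_flatMap_expandRun u hu
  calc (c.flatMap expandRun).length ≤ 2 * (c.map Prod.fst).length := by
        simpa using length_flatMap_expandRun_le c
    _ ≤ 2 * Fintype.card α := Nat.mul_le_mul_left 2 hc.length_le_card

end RunLength

section Pigeonhole

open scoped Finset

variable {α : Type*}

theorem infix_append_append_cons_of_infix {u w v : List α} (x : α) (huw : u <:+: w)
    (huv : u <:+: v) : ∃ m ≠ [], u ++ m ++ u <:+: w ++ x :: v := by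
  obtain ⟨s, t, rfl⟩ := huw
  obtain ⟨s', t', rfl⟩ := huv
  exact ⟨t ++ x :: s', by simp, s, t', by simp⟩

variable [DecidableEq α] {S : Finset (List α)} {L : ℕ}

/-- Each block of `L + 1` letters adds a new word of `S` to the factors, as long as no
`u m u` with `u ∈ S` occurs. -/
theorem le_card_filter_infix (hS : ∀ v : List α, L ≤ v.length → ∃ u ∈ S, u <:+: v) (n : ℕ) :
    ∀ w : List α, (∀ u ∈ S, ∀ m ≠ [], ¬u ++ m ++ u <:+: w) → n * (L + 1) + L ≤ w.length →
      n + 1 ≤ #{u ∈ S | u <:+: w} := by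
  induction n with
  | zero =>
    intro w _ hw
    obtain ⟨u, huS, hu⟩ := hS w (by simpa using hw)
    exact Finset.card_pos.2 ⟨u, Finset.mem_filter.2 ⟨huS, hu⟩⟩
  | succ n ih =>
    intro w hfree hw
    rw [Nat.succ_mul] at hw
    obtain ⟨x, v, hxv⟩ : ∃ x v, w.drop (n * (L + 1) + L) = x :: v :=
      exists_cons_of_length_pos (by simp only [length_drop]; omega)
    have hsplit : w = w.take (n * (L + 1) + L) ++ x :: v := by rw [← hxv, take_append_drop]
    have hvlen : L ≤ v.length := by
      have := congrArg length hxv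
      simp only [length_drop, length_cons] at this
      omega
    obtain ⟨u, huS, huv⟩ := hS v hvlen
    have hprefix := take_prefix (n * (L + 1) + L) w
    have hfree' : ∀ u ∈ S, ∀ m ≠ [], ¬u ++ m ++ u <:+: w.take (n * (L + 1) + L) :=
      fun u hu m hm h => hfree u hu m hm (h.trans hprefix.isInfix)
    have hu_new : u ∉ {u ∈ S | u <:+: w.take (n * (L + 1) + L)} := fun h => by
      obtain ⟨m, hm, hinf⟩ := infix_append_append_cons_of_infix x (Finset.mem_filter.1 h).2 huv
      exact hfree u huS m hm (hsplit ▸ hinf)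
    have hsub : insert u {u ∈ S | u <:+: w.take (n * (L + 1) + L)} ⊆ {u ∈ S | u <:+: w} := by
      refine Finset.insert_subset (Finset.mem_filter.2 ⟨huS, ?_⟩) ?_
      · rw [hsplit]; exact huv.trans ((suffix_cons x v).trans (suffix_append _ _)).isInfix
      · exact Finset.monotone_filter_right S fun u _ hu => hu.trans hprefix.isInfix
    have := Finset.card_le_card hsub
    rw [Finset.card_insert_of_notMem hu_new] at this
    have := ih _ hfree' (by simp only [length_take]; omega)
    omega

/-- Among `#S + 1` blocks of length `L` separated by single letters, two contain the same
`u ∈ S`. -/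
theorem exists_infix_append_append (hS : ∀ v : List α, L ≤ v.length → ∃ u ∈ S, u <:+: v)
    {w : List α} (hw : #S * (L + 1) + L ≤ w.length) : ∃ u ∈ S, ∃ m ≠ [], u ++ m ++ u <:+: w := by
  by_contra! hfree
  have := le_card_filter_infix hS #S w hfree hw
  have := Finset.card_filter_le S (· <:+: w)
  omega

end Pigeonhole

theorem sum_descFactorial_mul_two_pow_le (n : ℕ) :
    (∑ j ∈ Finset.range (n + 1), (n.descFactorial j * 2 ^ j : ℕ) : ℝ) ≤
      Real.exp (1 / 2) * 2 ^ n * n.factorial := by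
  have hterm (i : ℕ) (hi : i ∈ Finset.range (n + 1)) :
      ((n.descFactorial (n - i) * 2 ^ (n - i) : ℕ) : ℝ) =
        n.factorial * 2 ^ n * ((1 / 2 : ℝ) ^ i / i.factorial) := by
    have hin : i ≤ n := Nat.lt_succ_iff.1 (Finset.mem_range.1 hi)
    have hfact := Nat.factorial_mul_descFactorial (Nat.sub_le n i)
    rw [Nat.sub_sub_self hin] at hfact
    have hpow : (2 : ℝ) ^ n = 2 ^ (n - i) * 2 ^ i := by rw [← pow_add, Nat.sub_add_cancel hin]
    rw [← hfact, hpow]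
    push_cast
    field_simp
    rw [← mul_pow]
    norm_num
  calc (∑ j ∈ Finset.range (n + 1), (n.descFactorial j * 2 ^ j : ℕ) : ℝ)
      = ∑ i ∈ Finset.range (n + 1), ((n.descFactorial (n - i) * 2 ^ (n - i) : ℕ) : ℝ) := by
        rw [← Finset.sum_range_reflect]
        simp
    _ = n.factorial * 2 ^ n * ∑ i ∈ Finset.range (n + 1), (1 / 2 : ℝ) ^ i / i.factorial := by
        rw [Finset.sum_congr rfl hterm, Finset.mul_sum]
    _ ≤ n.factorial * 2 ^ n * Real.exp (1 / 2) := by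
        gcongr
        exact Real.sum_le_exp_of_nonneg (by norm_num) _
    _ = Real.exp (1 / 2) * 2 ^ n * n.factorial := by ring

/-- Codes for the words `a u a` over `Fin r` with `u` spaced-repeat-free: the outer letter `a`,
the number `j` of runs of `u`, their pairwise distinct letters (all different from `a`) and
their doubling flags. The code with `j = 0` stands for `a a a`. -/
def Z2Code (r : ℕ) : Type :=
  Σ a : Fin r, Σ j : Fin r, (Fin j ↪ {x : Fin r // x ≠ a}) × (Fin j → Bool)

noncomputable instance (r : ℕ) : Fintype (Z2Code r) := by unfold Z2Code; infer_instance

namespace Z2Code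

variable {r : ℕ}

def middle : Z2Code r → List (Fin r)
  | ⟨a, j, f, e⟩ =>
    if j.val = 0 then [a] else (List.ofFn fun i => ((f i : Fin r), e i)).flatMap expandRun

def word (t : Z2Code r) : List (Fin r) := t.1 :: t.middle ++ [t.1]

theorem middle_ne_nil (t : Z2Code r) : t.middle ≠ [] := by
  obtain ⟨a, j, f, e⟩ := t
  dsimp only [middle]
  split_ifs with hj
  · exact cons_ne_nil _ _
  · have : Nonempty (Fin j) := ⟨⟨0, Nat.pos_of_ne_zero hj⟩⟩
    simp [expandRun, flatMap_eq_nil_iff]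

theorem isZiminImage_two_word (t : Z2Code r) : IsZiminImage 2 t.word := by
  simpa [word] using (IsZiminImage.one (cons_ne_nil t.1 [])).succ t.middle_ne_nil

theorem exists_word_eq {a : Fin r} {u : List (Fin r)} (hu : ¬HasSpacedRepeat u) (hne : u ≠ [])
    (ha : u = [a] ∨ a ∉ u) : ∃ t : Z2Code r, t.word = a :: u ++ [a] := by
  rcases ha with rfl | ha
  · exact ⟨⟨a, ⟨0, a.pos⟩, .ofIsEmpty, Fin.elim0⟩, by simp [word, middle]⟩
  obtain ⟨c, rfl, hc⟩ := exists_eq_flatMap_expandRun u hu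
  have hca : ∀ k : Fin c.length, (c.get k).1 ≠ a := fun k hk =>
    ha (mem_flatMap_expandRun.2 (hk ▸ mem_map_of_mem (get_mem c k)))
  have hcr : c.length < r := by
    have := (nodup_cons.2 ⟨fun h => ha (mem_flatMap_expandRun.2 h), hc⟩).length_le_card
    simpa using this
  have hc0 : c.length ≠ 0 := fun h => hne (by simp [length_eq_zero_iff.1 h])
  let f : Fin c.length ↪ {x : Fin r // x ≠ a} :=
    ⟨fun k => ⟨(c.get k).1, hca k⟩, fun k k' hkk => Fin.ext <|
      (hc.getElem_inj_iff (hi := by simp) (hj := by simp)).1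
        (by simpa using congrArg Subtype.val hkk)⟩
  refine ⟨⟨a, ⟨c.length, hcr⟩, f, fun k => (c.get k).2⟩, ?_⟩
  simp only [word, middle, if_neg hc0]
  congr
  exact (congrArg _ (by funext k; rfl)).trans (ofFn_get c)

theorem exists_word_infix {v : List (Fin r)} (hv : 2 * r + 1 ≤ v.length) :
    ∃ t : Z2Code r, t.word <:+: v := by
  have hrep : HasSpacedRepeat v := by
    by_contra h
    have := length_le_of_not_hasSpacedRepeat h
    simp only [Fintype.card_fin] at this
    omega
  obtain ⟨a, u, hne, hinf, hu, ha⟩ := hrep.exists_minimal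
  obtain ⟨t, ht⟩ := exists_word_eq hu hne ha
  exact ⟨t, ht ▸ hinf⟩

theorem card (r : ℕ) :
    Fintype.card (Z2Code r) = r * ∑ j ∈ Finset.range r, (r - 1).descFactorial j * 2 ^ j := by
  have hcompl (a : Fin r) : Fintype.card {x : Fin r // x ≠ a} = r - 1 := by
    simp [Fintype.card_subtype_compl]
  simp only [Z2Code, Fintype.card_sigma, Fintype.card_prod, Fintype.card_embedding_eq,
    Fintype.card_fin, Fintype.card_fun, Fintype.card_bool, hcompl, Finset.sum_const,
    Finset.card_univ, smul_eq_mul, Fin.sum_univ_eq_sum_range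
      (fun j => (r - 1).descFactorial j * 2 ^ j)]

theorem card_mul_le (r : ℕ) :
    (Fintype.card (Z2Code r) * (2 * r + 2) : ℝ) ≤
      Real.sqrt (Real.exp 1) * 2 ^ r * (r + 1).factorial := by
  rcases r with _ | n
  · simp [card]
  rw [card, ← Real.exp_half, Nat.add_sub_cancel]
  push_cast
  calc (n + 1 : ℝ) * (∑ j ∈ Finset.range (n + 1), (n.descFactorial j * 2 ^ j : ℝ)) *
        (2 * (n + 1) + 2)
      ≤ (n + 1) * (Real.exp (1 / 2) * 2 ^ n * n.factorial) * (2 * (n + 1) + 2) := by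
        gcongr
        exact_mod_cast sum_descFactorial_mul_two_pow_le n
    _ = Real.exp (1 / 2) * 2 ^ (n + 1) * (n + 1 + 1).factorial := by
        push_cast [Nat.factorial_succ]
        ring

end Z2Code

theorem ziminEmbeds_three_of_le_length {r : ℕ} {w : List (Fin r)}
    (hw : Fintype.card (Z2Code r) * (2 * r + 2) + (2 * r + 1) ≤ w.length) :
    ziminEmbeds 3 w := by
  classical
  have hS : ∀ v : List (Fin r), 2 * r + 1 ≤ v.length →
      ∃ u ∈ Finset.univ.image Z2Code.word, u <:+: v := fun v hv =>
    let ⟨t, ht⟩ := Z2Code.exists_word_infix hv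
    ⟨t.word, Finset.mem_image_of_mem _ (Finset.mem_univ t), ht⟩
  have hcard : (Finset.univ.image (Z2Code.word (r := r))).card ≤ Fintype.card (Z2Code r) :=
    Finset.card_image_le
  obtain ⟨u, hu, m, hm, hinf⟩ := exists_infix_append_append hS (le_trans (by gcongr) hw)
  obtain ⟨t, -, rfl⟩ := Finset.mem_image.1 hu
  exact ⟨_, hinf, t.isZiminImage_two_word.succ hm⟩

theorem fbound_three_le_general (r : ℕ) :
    {N | ∀ w : List (Fin r), N ≤ w.length → ziminEmbeds 3 w}.Nonempty ∧
    (fbound 3 r : ℝ) ≤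
      Real.sqrt (Real.exp 1) * 2 ^ r * (Nat.factorial (r + 1)) +
        2 * r + 1 := by
  have hmem : Fintype.card (Z2Code r) * (2 * r + 2) + (2 * r + 1) ∈
      {N | ∀ w : List (Fin r), N ≤ w.length → ziminEmbeds 3 w} :=
    fun _ => ziminEmbeds_three_of_le_length
  refine ⟨⟨_, hmem⟩, ?_⟩
  calc (fbound 3 r : ℝ)
      ≤ (Fintype.card (Z2Code r) * (2 * r + 2) + (2 * r + 1) : ℕ) := by
        exact_mod_cast Nat.sInf_le hmem
    _ ≤ _ := by
        push_cast
        linarith [Z2Code.card_mul_le r]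

/-- For every `r ≥ 2`, `f(3,r)` is finite and
`f(3,r) ≤ √e · 2^r · (r+1)! + 2r + 1`. -/
theorem fbound_three_le (r : ℕ) (hr : 2 ≤ r) :
    {N | ∀ w : List (Fin r), N ≤ w.length → ziminEmbeds 3 w}.Nonempty ∧
    (fbound 3 r : ℝ) ≤
      Real.sqrt (Real.exp 1) * 2 ^ r * (Nat.factorial (r + 1)) +
        2 * r + 1 :=
  fbound_three_le_general r
end
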